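/- Let F(s) = ∑_{m≥1} f(m)/m^s be a Dirichlet series with nonnegative real coefficients f(m), absolutely convergent for s ≥ 2. Then for every n ≥ 1 and r ≥ 0, det(F(i+j+r))_{1≤i,j≤n} = (1/n!) ∑_{m₁,…,m_n ≥ 1} (∏_{i=1}^n f(m_i)/m_i^{2n+r}) ∏_{i<j}(m_i − m_j)². -/

import Mathlib

/-! With `x m = 1 / m` and `w m = f m / m ^ (2 + r)`, the Hankel entries are the absolutely
convergent sums `∑ₘ w m * x m ^ (i + j)`. Multilinearity of the determinant expands `det H` as a
sum over tuples `m` of `det (w (m j) * x (m j) ^ (i + j)) = ∏ⱼ w (m j) * x (m j) ^ j * V(x ∘ m)`,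
with `V` the Vandermonde determinant. Summing over the `n!` reorderings `m ∘ σ` of each tuple
multiplies the total by `n!` and turns the summand into `∏ⱼ w (m j) * V(x ∘ m) ^ 2`, and for
`x = 1 / m` this is the summand on the right. -/

open Finset

theorem Fin.prod_consEquiv_apply {M β : Type*} [CommMonoid M] {n : ℕ} (g : Fin (n + 1) → β → M)
    (p : β × (Fin n → β)) :
    ∏ i, g i (Fin.consEquiv (fun _ => β) p i) = g 0 p.1 * ∏ i : Fin n, g i.succ (p.2 i) := by
  simp [Fin.prod_univ_succ, Fin.consEquiv]

section FinPiProd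

variable {R β : Type*} [NormedCommRing R]

theorem summable_norm_prod_fin_pi {n : ℕ} (g : Fin n → β → R)
    (hg : ∀ i, Summable fun b => ‖g i b‖) :
    Summable fun m : Fin n → β => ‖∏ i, g i (m i)‖ := by
  induction n with
  | zero => exact Summable.of_finite
  | succ n ih =>
    rw [← (Fin.consEquiv fun _ => β).summable_iff]
    simpa only [Function.comp_def, Fin.prod_consEquiv_apply] using
      (hg 0).mul_norm (ih (fun i => g i.succ) fun i => hg i.succ)

theorem hasSum_prod_fin_pi [CompleteSpace R] {n : ℕ} (g : Fin n → β → R)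
    (hg : ∀ i, Summable fun b => ‖g i b‖) :
    HasSum (fun m : Fin n → β => ∏ i, g i (m i)) (∏ i, ∑' b, g i b) := by
  induction n with
  | zero => simp
  | succ n ih =>
    have htail := summable_norm_prod_fin_pi (fun i => g i.succ) fun i => hg i.succ
    rw [← (Fin.consEquiv fun _ => β).hasSum_iff, Fin.prod_univ_succ,
      ← (ih (fun i => g i.succ) fun i => hg i.succ).tsum_eq,
      tsum_mul_tsum_of_summable_norm (hg 0) htail]
    simpa only [Function.comp_def, Fin.prod_consEquiv_apply] using
      (summable_mul_of_summable_norm (hg 0) htail).hasSum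

theorem hasSum_det_of_tsum [CompleteSpace R] {n : ℕ} (g : Fin n → Fin n → β → R)
    (hg : ∀ i j, Summable fun b => ‖g i j b‖) :
    HasSum (fun m : Fin n → β => (Matrix.of fun i j => g i j (m j)).det)
      (Matrix.of fun i j => ∑' b, g i j b).det := by
  simp only [Matrix.det_apply', Matrix.of_apply]
  exact hasSum_sum fun σ _ =>
    (hasSum_prod_fin_pi (fun i => g (σ i) i) fun i => hg (σ i) i).mul_left _

end FinPiProd

theorem HasSum.sum_perm_comp {ι β M : Type*} [Fintype ι] [DecidableEq ι] [AddCommMonoid M]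
    [TopologicalSpace M] [ContinuousAdd M] {c : (ι → β) → M} {a : M} (hc : HasSum c a) :
    HasSum (fun m => ∑ σ : Equiv.Perm ι, c (m ∘ σ)) ((Fintype.card ι).factorial • a) := by
  rw [← Fintype.card_perm, ← Finset.card_univ, ← Finset.sum_const]
  exact hasSum_sum fun σ _ => (σ.symm.arrowCongr (Equiv.refl β)).hasSum_iff.2 hc

theorem det_of_mul_pow_add {R : Type*} [CommRing R] {n : ℕ} (w x : Fin n → R) :
    (Matrix.of fun a b : Fin n => w b * x b ^ ((a : ℕ) + b)).det =
      (∏ b, w b * x b ^ (b : ℕ)) * (Matrix.vandermonde x).det := by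
  have hfactor : (Matrix.of fun a b : Fin n => w b * x b ^ ((a : ℕ) + b)) =
      (Matrix.vandermonde x).transpose * Matrix.diagonal fun b => w b * x b ^ (b : ℕ) := by
    ext a b
    simp only [pow_add, Matrix.of_apply, Matrix.mul_diagonal, Matrix.transpose_apply,
      Matrix.vandermonde_apply]
    ring
  rw [hfactor, Matrix.det_mul, Matrix.det_transpose, Matrix.det_diagonal, mul_comm]

theorem det_vandermonde_comp_perm {R : Type*} [CommRing R] {n : ℕ} (x : Fin n → R)
    (σ : Equiv.Perm (Fin n)) :
    (Matrix.vandermonde (x ∘ σ)).det = Equiv.Perm.sign σ * (Matrix.vandermonde x).det :=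
  Matrix.det_permute σ (Matrix.vandermonde x)

theorem sum_perm_det_of_mul_pow_add {R : Type*} [CommRing R] {n : ℕ} (w x : Fin n → R) :
    ∑ σ : Equiv.Perm (Fin n),
        (Matrix.of fun a b : Fin n => (w ∘ σ) b * (x ∘ σ) b ^ ((a : ℕ) + b)).det =
      (∏ b, w b) * (Matrix.vandermonde x).det ^ 2 := by
  have hterm (σ : Equiv.Perm (Fin n)) :
      (Matrix.of fun a b : Fin n => (w ∘ σ) b * (x ∘ σ) b ^ ((a : ℕ) + b)).det =
        ((∏ b, w b) * (Matrix.vandermonde x).det) *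
          (Equiv.Perm.sign σ * ∏ b, x (σ b) ^ (b : ℕ)) := by
    rw [det_of_mul_pow_add, det_vandermonde_comp_perm, prod_mul_distrib]
    simp only [Function.comp_apply, Equiv.prod_comp σ w]
    ring
  rw [sum_congr rfl fun σ _ => hterm σ, ← mul_sum, sq, ← mul_assoc]
  congr 1
  rw [Matrix.det_apply']
  rfl

theorem prod_prod_Ioi_mul_eq_prod_pow {M : Type*} [CommMonoid M] {n : ℕ} (y : Fin n → M) :
    ∏ i, ∏ j ∈ Ioi i, (y i * y j) = ∏ i, y i ^ (n - 1) := by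
  rw [prod_prod_Ioi_mul_eq_prod_prod_off_diag (fun _ j => y j)]
  simp [prod_const, card_compl]

theorem det_vandermonde_inv {K : Type*} [Field K] {n : ℕ} (y : Fin n → K) (hy : ∀ i, y i ≠ 0) :
    (Matrix.vandermonde fun i => (y i)⁻¹).det =
      (∏ i, y i ^ (n - 1))⁻¹ * ∏ i, ∏ j ∈ Ioi i, (y i - y j) := by
  have hpair (i j : Fin n) : (y j)⁻¹ - (y i)⁻¹ = (y i * y j)⁻¹ * (y i - y j) := by
    field_simp [hy i, hy j]
  rw [Matrix.det_vandermonde]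
  simp_rw [hpair]
  rw [prod_congr rfl fun i _ => prod_mul_distrib, prod_mul_distrib]
  simp only [prod_inv_distrib]
  rw [prod_prod_Ioi_mul_eq_prod_pow]

theorem prod_div_pow_mul_det_vandermonde_inv_sq {K : Type*} [Field K] {n : ℕ} (a y : Fin n → K)
    (hy : ∀ i, y i ≠ 0) (r : ℕ) :
    (∏ i, a i / y i ^ (2 + r)) * (Matrix.vandermonde fun i => (y i)⁻¹).det ^ 2 =
      (∏ i, a i / y i ^ (2 * n + r)) * ∏ i, ∏ j ∈ Ioi i, (y i - y j) ^ 2 := by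
  have hexp (i : Fin n) :
      a i / y i ^ (2 + r) * ((y i ^ (n - 1)) ^ 2)⁻¹ = a i / y i ^ (2 * n + r) := by
    have : 2 * n + r = 2 + r + (n - 1) * 2 := by have := i.pos; omega
    rw [this, pow_add _ (2 + r), pow_mul, ← div_div, div_eq_mul_inv _ ((y i ^ (n - 1)) ^ 2)]
  rw [det_vandermonde_inv y hy, mul_pow, inv_pow, ← prod_pow, ← prod_pow, ← prod_inv_distrib,
    ← mul_assoc, ← prod_mul_distrib]
  simp only [hexp, ← prod_pow]

theorem hankel_dirichlet_sum_general (f : ℕ → ℝ)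
    (hsum : ∀ s : ℕ, 2 ≤ s → Summable (fun m : ℕ+ => f m / (m : ℝ) ^ s))
    (F : ℕ → ℝ) (hF : ∀ s : ℕ, 2 ≤ s → F s = ∑' m : ℕ+, f m / (m : ℝ) ^ s)
    (n r : ℕ) :
    Matrix.det (Matrix.of fun i j : Fin n =>
        F ((i : ℕ) + 1 + ((j : ℕ) + 1) + r)) =
      (1 / (n.factorial : ℝ)) *
        ∑' m : Fin n → ℕ+,
          (∏ i, f (m i) / (m i : ℝ) ^ (2 * n + r)) *
            ∏ i, ∏ j ∈ Finset.Ioi i, ((m i : ℝ) - (m j : ℝ)) ^ 2 := by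
  set w : ℕ+ → ℝ := fun b => f b / (b : ℝ) ^ (2 + r)
  set x : ℕ+ → ℝ := fun b => (b : ℝ)⁻¹
  have hterm (i j : ℕ) (b : ℕ+) :
      f b / (b : ℝ) ^ (i + 1 + (j + 1) + r) = w b * x b ^ (i + j) := by
    rw [inv_pow, ← div_eq_mul_inv, div_div, ← pow_add]
    ring_nf
  have hentry (i j : Fin n) :
      F ((i : ℕ) + 1 + ((j : ℕ) + 1) + r) = ∑' b, w b * x b ^ ((i : ℕ) + j) := by
    rw [hF _ (by omega)]
    exact tsum_congr (hterm i j)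
  have hsummable (i j : Fin n) : Summable fun b => ‖w b * x b ^ ((i : ℕ) + j)‖ :=
    (hsum ((i : ℕ) + 1 + ((j : ℕ) + 1) + r) (by omega)).abs.congr fun b => by
      rw [Real.norm_eq_abs, hterm]
  have hsummand (m : Fin n → ℕ+) :
      ∑ σ : Equiv.Perm (Fin n),
          (Matrix.of fun i j : Fin n => w ((m ∘ σ) j) * x ((m ∘ σ) j) ^ ((i : ℕ) + j)).det =
        (∏ i, f (m i) / (m i : ℝ) ^ (2 * n + r)) *
          ∏ i, ∏ j ∈ Finset.Ioi i, ((m i : ℝ) - (m j : ℝ)) ^ 2 :=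
    (sum_perm_det_of_mul_pow_add (w ∘ m) (x ∘ m)).trans
      (prod_div_pow_mul_det_vandermonde_inv_sq _ _ (fun i => by positivity) r)
  have hsym := (hasSum_det_of_tsum _ hsummable).sum_perm_comp
  simp only [hsummand, ← hentry, Fintype.card_fin, nsmul_eq_mul] at hsym
  rw [hsym.tsum_eq]
  field_simp

theorem hankel_dirichlet_sum (f : ℕ → ℝ) (hf : ∀ m, 0 ≤ f m)
    (hsum : ∀ s : ℕ, 2 ≤ s → Summable (fun m : ℕ+ => f m / (m : ℝ) ^ s))
    (F : ℕ → ℝ) (hF : ∀ s : ℕ, 2 ≤ s → F s = ∑' m : ℕ+, f m / (m : ℝ) ^ s)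
    (n r : ℕ) (hn : 1 ≤ n) :
    Matrix.det (Matrix.of fun i j : Fin n =>
        F ((i : ℕ) + 1 + ((j : ℕ) + 1) + r)) =
      (1 / (n.factorial : ℝ)) *
        ∑' m : Fin n → ℕ+,
          (∏ i, f (m i) / (m i : ℝ) ^ (2 * n + r)) *
            ∏ i, ∏ j ∈ Finset.Ioi i, ((m i : ℝ) - (m j : ℝ)) ^ 2 :=
  hankel_dirichlet_sum_general f hsum F hF n r
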